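/- Let μ, ν > 0 and let c₁, c₂ be real numbers with Ψ(t) = c₁·e^{μt} for t ≤ 0 and Ψ(t) = 1 − c₂·e^{−νt} for t > 0. Then μν·∫₀^∞∫₀^∞ Ψ(u − v)·e^{−μu−νv} du dv = (μν/(μ+ν)²)·c₁ − (μν/(μ+ν)²)·c₂ + ν/(μ+ν). -/

import Mathlib

open MeasureTheory Set Real

/-! For fixed `u > 0` the inner integral splits at `v = u`, where `Ψ (u - v)` changes branch; on
both pieces the integrand is a combination of exponentials in `v`, so the inner integral equals
`a e^{-μu} + b e^{-(μ+ν)u} + c u e^{-(μ+ν)u}`, whose integral over `u > 0` is elementary. -/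

lemma integral_exp_neg_mul_Ioi {a : ℝ} (ha : 0 < a) (b : ℝ) :
    ∫ x in Ioi b, exp (-a * x) = exp (-a * b) / a := by
  rw [integral_exp_mul_Ioi (neg_lt_zero.mpr ha), neg_div_neg_eq]

lemma intervalIntegral_exp_neg_mul {a : ℝ} (ha : 0 < a) (b c : ℝ) :
    ∫ x in b..c, exp (-a * x) = (exp (-a * b) - exp (-a * c)) / a := by
  rw [← intervalIntegral.integral_Ioi_sub_Ioi' (exp_neg_integrableOn_Ioi b ha)
    (exp_neg_integrableOn_Ioi c ha), integral_exp_neg_mul_Ioi ha, integral_exp_neg_mul_Ioi ha,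
    sub_div]

lemma integrableOn_mul_exp_neg_mul_Ioi {a : ℝ} (ha : 0 < a) :
    IntegrableOn (fun x => x * exp (-a * x)) (Ioi 0) := by
  simpa using integrableOn_rpow_mul_exp_neg_mul_rpow (s := 1) (p := 1) (by norm_num) one_pos ha

lemma integral_mul_exp_neg_mul_Ioi {a : ℝ} (ha : 0 < a) :
    ∫ x in Ioi 0, x * exp (-a * x) = 1 / a ^ 2 := by
  have h := integral_rpow_mul_exp_neg_mul_Ioi two_pos ha
  norm_num [Gamma_two] at h
  simpa [neg_mul] using h

lemma integral_Ioi_exp_combination {p q : ℝ} (hp : 0 < p) (hq : 0 < q) (a b c : ℝ) :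
    ∫ x in Ioi 0, (a * exp (-p * x) + b * exp (-q * x) + c * (x * exp (-q * x)))
      = a / p + b / q + c / q ^ 2 := by
  have hexp_p := (exp_neg_integrableOn_Ioi 0 hp).const_mul a
  have hexp_q := (exp_neg_integrableOn_Ioi 0 hq).const_mul b
  have hmul := (integrableOn_mul_exp_neg_mul_Ioi hq).const_mul c
  have hexp : IntegrableOn (fun x => a * exp (-p * x) + b * exp (-q * x)) (Ioi 0) :=
    hexp_p.add hexp_q
  rw [integral_add hexp hmul, integral_add hexp_p hexp_q, integral_const_mul,
    integral_const_mul, integral_const_mul, integral_exp_neg_mul_Ioi hp,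
    integral_exp_neg_mul_Ioi hq, integral_mul_exp_neg_mul_Ioi hq]
  simp [div_eq_mul_inv]

lemma integral_Ioi_ansatz_sub_mul_exp {μ ν c₁ c₂ : ℝ} (hν : 0 < ν) (hμν : 0 < μ + ν)
    {Ψ : ℝ → ℝ} (hΨ : ∀ t, Ψ t = if t ≤ 0 then c₁ * exp (μ * t) else 1 - c₂ * exp (-ν * t))
    {u : ℝ} (hu : 0 < u) :
    ∫ v in Ioi 0, Ψ (u - v) * exp (-μ * u - ν * v)
      = 1 / ν * exp (-μ * u) + (c₁ / (μ + ν) - 1 / ν) * exp (-(μ + ν) * u)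
        + -c₂ * (u * exp (-(μ + ν) * u)) := by
  set F := fun v => Ψ (u - v) * exp (-μ * u - ν * v)
  set G := fun v => exp (-μ * u) * exp (-ν * v) - c₂ * exp (-(μ + ν) * u)
  have hG : Continuous G := by fun_prop
  have hF_Ioo : EqOn F G (Ioo 0 u) := by
    intro v hv
    simp only [F, G, hΨ, if_neg (not_le.mpr (sub_pos.mpr hv.2)), sub_mul, one_mul, mul_assoc,
      ← exp_add]
    ring_nf
  have hF_Ioi : EqOn F (fun v => c₁ * exp (-(μ + ν) * v)) (Ioi u) := by
    intro v hv
    have hneg : u - v ≤ 0 := sub_nonpos.mpr (le_of_lt hv)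
    simp only [F, hΨ, if_pos hneg, mul_assoc, ← exp_add]
    ring_nf
  have hF_int_Ioo : IntervalIntegrable F volume 0 u := by
    refine (hG.intervalIntegrable 0 u).congr_uIoo ?_
    rw [uIoo_of_le hu.le]
    exact hF_Ioo.symm
  have hF_int_Ioi : IntegrableOn F (Ioi u) := by
    have h : IntegrableOn (fun v => c₁ * exp (-(μ + ν) * v)) (Ioi u) :=
      (exp_neg_integrableOn_Ioi u hμν).const_mul c₁
    exact h.congr_fun hF_Ioi.symm measurableSet_Ioi
  rw [← intervalIntegral.integral_interval_add_Ioi' hF_int_Ioo hF_int_Ioi,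
    intervalIntegral.integral_congr_Ioo_of_le hu.le hF_Ioo,
    setIntegral_congr_fun measurableSet_Ioi hF_Ioi]
  simp only [G]
  rw [intervalIntegral.integral_sub
      ((by fun_prop : Continuous fun v => exp (-μ * u) * exp (-ν * v)).intervalIntegrable 0 u)
      intervalIntegrable_const,
    intervalIntegral.integral_const_mul, intervalIntegral_exp_neg_mul hν,
    intervalIntegral.integral_const, integral_const_mul, integral_exp_neg_mul_Ioi hμν]
  have hexp_add : exp (-μ * u) * exp (-ν * u) = exp (-(μ + ν) * u) := by
    rw [← exp_add]; ring_nf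
  simp only [smul_eq_mul, sub_zero, mul_zero, exp_zero]
  rw [← hexp_add]
  field_simp
  ring

/-- For a function of the form `Ψ(t) = c₁e^{μt}` for `t ≤ 0`,
`Ψ(t) = 1 - c₂e^{-νt}` for `t > 0`, the double integral `μν·∬ Ψ(u-v)e^{-μu-νv} du dv`
equals `(μν/(μ+ν)²)c₁ - (μν/(μ+ν)²)c₂ + ν/(μ+ν)`. -/
theorem double_integral_ansatz (μ ν : ℝ) (hμ : 0 < μ) (hν : 0 < ν) (c₁ c₂ : ℝ)
    (Ψ : ℝ → ℝ)
    (hΨ : ∀ t : ℝ, Ψ t = if t ≤ 0 then c₁ * Real.exp (μ*t) else 1 - c₂ * Real.exp (-ν*t)) :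
    μ * ν * ∫ u in Set.Ioi (0:ℝ), ∫ v in Set.Ioi (0:ℝ), Ψ (u - v) * Real.exp (-μ*u - ν*v)
      = μ*ν/(μ+ν)^2 * c₁ - μ*ν/(μ+ν)^2 * c₂ + ν/(μ+ν) := by
  have hμν : 0 < μ + ν := add_pos hμ hν
  rw [setIntegral_congr_fun measurableSet_Ioi
      fun u hu => integral_Ioi_ansatz_sub_mul_exp hν hμν hΨ hu,
    integral_Ioi_exp_combination hμ hμν]
  field_simp
  ring
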